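/- For every n ≥ 1 and every x ∈ [0,1], the first central moment of the modified Durrmeyer operator satisfies D_n^{M,1}(t − x; x) = (1 − 2x)(2a_1(n) + 3a_0(n))/(n+2). -/

import Mathlib

open Filter Topology

/-- Bernstein basis polynomial `p_{n,k}(x)`, zero when `k < 0` or `k > n`. -/
noncomputable def bern (n : ℕ) (k : ℤ) (x : ℝ) : ℝ :=
  if 0 ≤ k ∧ k ≤ (n : ℤ) then (n.choose k.toNat : ℝ) * x ^ k.toNat * (1 - x) ^ (n - k.toNat)
  else 0

/-- Modified Bernstein basis `p_{n,k}^{M,1}(x)` of Khosravian-Arab et al. -/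
noncomputable def pM1 (a0 a1 : ℕ → ℝ) (n : ℕ) (k : ℤ) (x : ℝ) : ℝ :=
  (a1 n * x + a0 n) * bern (n - 1) k x + (a1 n * (1 - x) + a0 n) * bern (n - 1) (k - 1) x

/-- First-order modified Durrmeyer operator `D_n^{M,1}(f;x)`. -/
noncomputable def DM1 (a0 a1 : ℕ → ℝ) (n : ℕ) (f : ℝ → ℝ) (x : ℝ) : ℝ :=
  ((n : ℝ) + 1) * ∑ k ∈ Finset.range (n + 1),
    pM1 a0 a1 n k x * ∫ t in (0:ℝ)..1, bern n k t * f t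

/-!
Every Durrmeyer weight is a Beta integral, `∫₀¹ p_{n,k} = 1/(n+1)`, and `t p_{n,k}(t)` is the
multiple `(k+1)/(n+1)` of `p_{n+1,k+1}(t)`, so `(n+1) ∫₀¹ p_{n,k}(t) (t - x) dt = (k+1)/(n+2) - x`
is affine in `k`. Splitting `p_{n,k}^{M,1}` into its two Bernstein parts of degree `n - 1`, the
second shifted by one in `k`, reduces the sum to the moments `∑ p_{m,j}(x) = 1` and
`∑ j p_{m,j}(x) = m x` of the Bernstein basis.
-/

open Finset intervalIntegral Nat

theorem integral_pow_mul_one_sub_pow_succ_eq (a b : ℕ) :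
    ((a : ℝ) + 1) * ∫ t in (0:ℝ)..1, t ^ a * (1 - t) ^ (b + 1)
      = ((b : ℝ) + 1) * ∫ t in (0:ℝ)..1, t ^ (a + 1) * (1 - t) ^ b := by
  have hderiv : ∀ t : ℝ, HasDerivAt (fun t : ℝ => t ^ (a + 1) * (1 - t) ^ (b + 1))
      (((a : ℝ) + 1) * (t ^ a * (1 - t) ^ (b + 1)) - ((b : ℝ) + 1) * (t ^ (a + 1) * (1 - t) ^ b))
      t := by
    intro t
    have hl : HasDerivAt (fun t : ℝ => t ^ (a + 1)) (((a : ℝ) + 1) * t ^ a) t := by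
      simpa using hasDerivAt_pow (a + 1) t
    have hr : HasDerivAt (fun t : ℝ => (1 - t) ^ (b + 1)) (-(((b : ℝ) + 1) * (1 - t) ^ b)) t := by
      refine ((hasDerivAt_pow (b + 1) (1 - t)).comp t ((hasDerivAt_id t).const_sub 1)).congr_deriv ?_
      push_cast
      ring
    exact (hl.mul hr).congr_deriv (by ring)
  have hzero := integral_eq_sub_of_hasDerivAt (fun t _ => hderiv t)
    (Continuous.intervalIntegrable (by fun_prop) 0 1)
  rw [integral_sub (Continuous.intervalIntegrable (by fun_prop) _ _)
    (Continuous.intervalIntegrable (by fun_prop) _ _), integral_const_mul,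
    integral_const_mul] at hzero
  simp only [one_pow, sub_self, zero_pow (Nat.succ_ne_zero _), mul_zero, sub_zero] at hzero
  linarith

theorem integral_pow_mul_one_sub_pow (a b : ℕ) :
    ∫ t in (0:ℝ)..1, t ^ a * (1 - t) ^ b = (a ! * b ! : ℝ) / (a + b + 1)! := by
  induction b generalizing a with
  | zero =>
    simp [integral_pow, Nat.factorial_succ, mul_comm, div_mul_cancel_left₀, Nat.factorial_ne_zero]
  | succ b ih =>
    have hstep := integral_pow_mul_one_sub_pow_succ_eq a b
    rw [ih (a + 1), show a + 1 + b + 1 = a + (b + 1) + 1 by omega] at hstep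
    rw [Nat.factorial_succ b]
    rw [Nat.factorial_succ a] at hstep
    push_cast at hstep ⊢
    field_simp at hstep ⊢
    linear_combination hstep

theorem bern_natCast_of_le {n k : ℕ} (hk : k ≤ n) (t : ℝ) :
    bern n k t = n.choose k * (t ^ k * (1 - t) ^ (n - k)) := by
  simp [bern, hk, mul_assoc]

theorem bern_natCast_eq_eval {n k : ℕ} (hk : k ≤ n) (x : ℝ) :
    bern n k x = (bernsteinPolynomial ℝ n k).eval x := by
  simp [bern_natCast_of_le hk, bernsteinPolynomial, mul_assoc]

theorem bern_of_lt_zero {n : ℕ} {k : ℤ} (hk : k < 0) (x : ℝ) : bern n k x = 0 :=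
  if_neg (by omega)

theorem bern_of_gt {n : ℕ} {k : ℤ} (hk : (n : ℤ) < k) (x : ℝ) : bern n k x = 0 :=
  if_neg (by omega)

theorem continuous_bern (n : ℕ) (k : ℤ) : Continuous (bern n k) := by
  unfold bern
  split_ifs <;> fun_prop

theorem integral_bern {n k : ℕ} (hk : k ≤ n) : ∫ t in (0:ℝ)..1, bern n k t = 1 / (n + 1) := by
  simp_rw [bern_natCast_of_le hk]
  rw [integral_const_mul, integral_pow_mul_one_sub_pow, Nat.add_sub_cancel' hk,
    Nat.factorial_succ]
  have hchoose : (n.choose k * k ! * (n - k)! : ℝ) = n ! := by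
    exact_mod_cast Nat.choose_mul_factorial_mul_factorial hk
  push_cast
  field_simp
  linear_combination hchoose

theorem mul_bern {n k : ℕ} (hk : k ≤ n) (t : ℝ) :
    t * bern n k t = (k + 1) / (n + 1) * bern (n + 1) (k + 1 : ℕ) t := by
  rw [bern_natCast_of_le hk, bern_natCast_of_le (by omega), Nat.add_sub_add_right]
  have hchoose : ((n + 1) * n.choose k : ℝ) = (n + 1).choose (k + 1) * (k + 1) := by
    exact_mod_cast Nat.add_one_mul_choose_eq n k
  field_simp
  linear_combination (t ^ (k + 1) * (1 - t) ^ (n - k)) * hchoose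

theorem integral_bern_mul_sub {n k : ℕ} (hk : k ≤ n) (x : ℝ) :
    ∫ t in (0:ℝ)..1, bern n k t * (t - x) = ((k + 1) / (n + 2) - x) / (n + 1) := by
  simp_rw [mul_sub, mul_comm (bern n k _), mul_bern hk]
  rw [integral_sub ((continuous_bern _ _).const_mul _ |>.intervalIntegrable _ _)
    ((continuous_bern _ _).const_mul _ |>.intervalIntegrable _ _), integral_const_mul,
    integral_const_mul,
    integral_bern (by omega), integral_bern hk]
  push_cast
  field_simp
  ring

theorem sum_bern_mul_affine (m : ℕ) (x α β : ℝ) :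
    ∑ j ∈ range (m + 1), bern m j x * (α * j + β) = α * (m * x) + β := by
  have heval : ∀ j ∈ range (m + 1), bern m j x = (bernsteinPolynomial ℝ m j).eval x :=
    fun j hj => bern_natCast_eq_eval (mem_range_succ_iff.mp hj) x
  have hsum : ∑ j ∈ range (m + 1), bern m j x = 1 := by
    rw [sum_congr rfl heval, ← Polynomial.eval_finsetSum, bernsteinPolynomial.sum,
      Polynomial.eval_one]
  have hsum_mul : ∑ j ∈ range (m + 1), (j : ℝ) * bern m j x = m * x := by
    rw [sum_congr rfl fun j hj => by rw [heval j hj]]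
    simpa [Polynomial.eval_finsetSum] using
      congrArg (Polynomial.eval x) (bernsteinPolynomial.sum_smul ℝ m)
  calc ∑ j ∈ range (m + 1), bern m j x * (α * j + β)
      = α * ∑ j ∈ range (m + 1), (j : ℝ) * bern m j x + β * ∑ j ∈ range (m + 1), bern m j x := by
        rw [mul_sum, mul_sum, ← sum_add_distrib]
        exact sum_congr rfl fun _ _ => by ring
    _ = α * (m * x) + β := by rw [hsum, hsum_mul, mul_one]

theorem sum_pM1_mul (a0 a1 : ℕ → ℝ) (m : ℕ) (x : ℝ) (g : ℕ → ℝ) :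
    ∑ k ∈ range (m + 2), pM1 a0 a1 (m + 1) k x * g k
      = (a1 (m + 1) * x + a0 (m + 1)) * ∑ j ∈ range (m + 1), bern m j x * g j
        + (a1 (m + 1) * (1 - x) + a0 (m + 1)) * ∑ j ∈ range (m + 1), bern m j x * g (j + 1) := by
  have hlow : ∑ k ∈ range (m + 2), bern m k x * g k = ∑ j ∈ range (m + 1), bern m j x * g j := by
    rw [sum_range_succ, bern_of_gt (by omega), zero_mul, add_zero]
  have hshift : ∑ k ∈ range (m + 2), bern m ((k : ℤ) - 1) x * g k
      = ∑ j ∈ range (m + 1), bern m j x * g (j + 1) := by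
    rw [sum_range_succ', Nat.cast_zero, zero_sub, bern_of_lt_zero (by omega), zero_mul, add_zero]
    push_cast
    simp only [add_sub_cancel_right]
  simp only [pM1, Nat.add_sub_cancel, add_mul, sum_add_distrib, mul_assoc, ← mul_sum, hlow, hshift]

theorem DM1_central_moment_one_general (a0 a1 : ℕ → ℝ) (n : ℕ) (hn : 1 ≤ n)
    (x : ℝ) :
    DM1 a0 a1 n (fun t => t - x) x
      = (1 - 2 * x) * (2 * a1 n + 3 * a0 n) / ((n : ℝ) + 2) := by
  obtain ⟨m, rfl⟩ : ∃ m, n = m + 1 := ⟨n - 1, by omega⟩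
  have hmoment : ∀ k ∈ range (m + 2), ((m + 1 : ℕ) + 1 : ℝ) *
      (pM1 a0 a1 (m + 1) k x * ∫ t in (0:ℝ)..1, bern (m + 1) k t * (t - x))
        = pM1 a0 a1 (m + 1) k x * (1 / (m + 3) * k + (1 / (m + 3) - x)) := by
    intro k hk
    rw [integral_bern_mul_sub (mem_range_succ_iff.mp hk)]
    push_cast
    field_simp
    ring
  have hshift : ∀ j : ℕ, 1 / ((m : ℝ) + 3) * (j + 1 : ℕ) + (1 / (m + 3) - x)
      = 1 / (m + 3) * j + (2 / (m + 3) - x) := by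
    intro j
    push_cast
    ring
  rw [DM1, mul_sum, sum_congr rfl hmoment, sum_pM1_mul]
  simp only [hshift, sum_bern_mul_affine]
  push_cast
  field_simp
  ring

theorem DM1_central_moment_one (a0 a1 : ℕ → ℝ) (n : ℕ) (hn : 1 ≤ n)
    (x : ℝ) (hx : x ∈ Set.Icc (0:ℝ) 1) :
    DM1 a0 a1 n (fun t => t - x) x
      = (1 - 2 * x) * (2 * a1 n + 3 * a0 n) / ((n : ℝ) + 2) :=
  DM1_central_moment_one_general a0 a1 n hn x
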